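/- Let (K, δ) be a differential field of characteristic p > 0 and t transcendental over K; extend δ to K(t) with δ(t) = 0. If A ⊆ C_K is a differential p-basis of (K, δ), then A ∪ {t} is a differential p-basis of (K(t), δ). -/

import Mathlib

set_option synthInstance.maxHeartbeats 1000000
set_option maxHeartbeats 1000000

attribute [-instance] RatFunc.instAlgebraOfPolynomial

noncomputable section

variable (p : ℕ) [Fact p.Prime]

/-- The set of `p`-monomials of `A`: products `a₁^{i₁} ⋯ aₙ^{iₙ}` with the `aⱼ ∈ A`
distinct and `0 ≤ iⱼ < p`. -/
def pMonomials {F : Type*} [Field F] (A : Set F) : Set F :=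
  {m | ∃ (n : ℕ) (a : Fin n → F), Function.Injective a ∧ (∀ i, a i ∈ A) ∧
        ∃ e : Fin n → Fin p, m = ∏ j, a j ^ (e j : ℕ)}

/-- `A` is differentially `p`-independent: the `p`-monomials of `A` are linearly
independent over `F^p`. -/
def pIndep {F : Type*} [Field F] [CharP F p] (A : Set F) : Prop :=
  ∀ (n : ℕ) (a : Fin n → F), Function.Injective a → (∀ i, a i ∈ A) →
    LinearIndependent ((frobenius F p).fieldRange)
      (fun e : Fin n → Fin p => ∏ j, a j ^ (e j : ℕ))

/-- `A` is differentially `p`-spanning: the `p`-monomials of `A` span the constants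
`C_F` over `F^p`. -/
def pSpan {F : Type*} [Field F] [CharP F p] (δF : Derivation ℤ F F) (A : Set F) : Prop :=
  ∀ b : F, δF b = 0 →
    b ∈ Submodule.span ((frobenius F p).fieldRange) (pMonomials p A)

/-- `A` is a differential `p`-basis of `(F, δF)`: a subset of the constants that is
differentially `p`-independent and differentially `p`-spanning. -/
def DiffPBasis {F : Type*} [Field F] [CharP F p] (δF : Derivation ℤ F F) (A : Set F) :
    Prop :=
  (∀ x ∈ A, δF x = 0) ∧ pIndep p A ∧ pSpan p δF A

instance ratFuncCharP {K : Type*} [Field K] [CharP K p] : CharP (RatFunc K) p :=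
  charP_of_injective_ringHom (RatFunc.C (K := K)).injective p

/-!
The constants of `K(t)` are the quotients `P / Q` (in lowest terms, `Q` monic) whose numerator
and denominator have constant coefficients: `D (P / Q) = 0` makes `Q` divide its coefficientwise
derivative, which has smaller degree. Writing `P / Q = (1 / Q)ᵖ · P Qᵖ⁻¹` and
`tⁿ = (t^(n / p))ᵖ · t^(n % p)` shows that they are spanned over `K(t)ᵖ` by the `p`-monomials of
`A ∪ {t}`. For independence, a `K(t)ᵖ`-relation among the `m tʳ` (`m` a `p`-monomial of `A`,
`r < p`) becomes, after clearing denominators, a relation `∑ G_{r,m}ᵖ m tʳ = 0` with polynomial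
`G`; the coefficient of `t^(p k + s)` only sees the terms with `r = s` and gives a `Kᵖ`-relation
among the `m`.
-/

open Polynomial

namespace Derivation

variable {R A : Type*} [CommRing R] [CommRing A] [Algebra R A] (d : Derivation R A A)

-- `Differential.mapCoeffs`, for a derivation that is not a `Differential` instance.
def mapCoeffsSelf : Derivation R A[X] A[X] :=
  PolynomialModule.equivPolynomialSelf.compDer d.mapCoeffs

@[simp]
lemma coeff_mapCoeffsSelf (P : A[X]) (n : ℕ) : (d.mapCoeffsSelf P).coeff n = d (P.coeff n) :=
  rfl

lemma mapCoeffsSelf_eq_zero_iff {P : A[X]} :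
    d.mapCoeffsSelf P = 0 ↔ ∀ n, d (P.coeff n) = 0 := by
  simp [Polynomial.ext_iff]

lemma degree_mapCoeffsSelf_lt [Nontrivial A] {Q : A[X]} (hQ : Q.Monic) :
    (d.mapCoeffsSelf Q).degree < Q.degree := by
  rw [degree_eq_natDegree hQ.ne_zero, degree_lt_iff_coeff_zero]
  intro m hm
  rcases hm.eq_or_lt with h | h
  · rw [coeff_mapCoeffsSelf, ← h, hQ.coeff_natDegree, map_one_eq_zero]
  · rw [coeff_mapCoeffsSelf, coeff_eq_zero_of_natDegree_lt h, map_zero]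

end Derivation

abbrev pMonomialSpan {F : Type*} [Field F] [CharP F p] (A : Set F) :
    Submodule (frobenius F p).fieldRange F :=
  Submodule.span (frobenius F p).fieldRange (pMonomials p A)

lemma map_mem_frobenius_fieldRange {F L : Type*} [Field F] [CharP F p] [Field L] [CharP L p]
    (f : F →+* L) {x : F} (hx : x ∈ (frobenius F p).fieldRange) :
    f x ∈ (frobenius L p).fieldRange := by
  obtain ⟨y, rfl⟩ := hx
  exact ⟨f y, (f.map_frobenius p y).symm⟩

lemma pIndep.linearIndependent_prod {F : Type*} [Field F] [CharP F p] {A : Set F}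
    (hA : pIndep p A) {ι : Type*} [Fintype ι] {b : ι → F} (hb : Function.Injective b)
    (hbA : ∀ i, b i ∈ A) :
    LinearIndependent (frobenius F p).fieldRange
      (fun e : ι → Fin p => ∏ i, b i ^ (e i : ℕ)) := by
  let σ := Fintype.equivFin ι
  convert (hA _ (b ∘ σ.symm) (hb.comp σ.symm.injective) fun j => hbA _).comp
    (fun e => e ∘ σ.symm) σ.symm.surjective.injective_comp_right using 1
  funext e
  exact (Equiv.prod_comp σ.symm fun i => b i ^ (e i : ℕ)).symm

lemma Nat.eq_of_mul_add_eq_mul_add {n m k r s : ℕ} (hr : r < n) (hs : s < n)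
    (h : n * m + s = n * k + r) : s = r := by
  simpa [Nat.mul_add_mod, Nat.mod_eq_of_lt hr, Nat.mod_eq_of_lt hs] using congrArg (· % n) h

lemma coeff_pow_mul_C_mul_X_pow {R : Type*} [CommSemiring R] [CharP R p] (f : R[X]) (c : R)
    {r s : ℕ} (hr : r < p) (hs : s < p) (m : ℕ) :
    (f ^ p * C c * X ^ r).coeff (p * m + s) = if r = s then c * f.coeff m ^ p else 0 := by
  have hp := (Fact.out : p.Prime).pos
  rw [coeff_mul_X_pow', coeff_mul_C, ← map_frobenius_expand p f, coeff_map, coeff_expand hp]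
  split_ifs with hle hdvd hrs hrs
  · subst hrs
    rw [Nat.add_sub_cancel, Nat.mul_div_cancel_left _ hp, frobenius_def, mul_comm]
  · obtain ⟨k, hk⟩ := hdvd
    exact absurd (Nat.eq_of_mul_add_eq_mul_add (m := m) (k := k) hr hs (by omega)).symm hrs
  · subst hrs
    exact absurd (by simp) hdvd
  · rw [map_zero, zero_mul]
  · omega
  · rfl

section RatFunc

attribute [local instance 50] RatFunc.instAlgebraOfPolynomial

variable {K : Type*} [Field K] {A : Set K} {δ : Derivation ℤ K K}
  {D : Derivation ℤ (RatFunc K) (RatFunc K)}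

lemma RatFunc.C_ne_X (c : K) : RatFunc.C c ≠ RatFunc.X := by
  rw [← RatFunc.algebraMap_C, ← RatFunc.algebraMap_X]
  exact fun h => X_ne_C c (IsFractionRing.injective K[X] (RatFunc K) h).symm

lemma RatFunc.derivation_algebraMap (hD : ∀ a : K, D (RatFunc.C a) = RatFunc.C (δ a))
    (hX : D RatFunc.X = 0) (P : K[X]) :
    D (algebraMap K[X] (RatFunc K) P) = algebraMap K[X] (RatFunc K) (δ.mapCoeffsSelf P) := by
  induction P using Polynomial.induction_on' with
  | add f g hf hg => simp only [map_add, hf, hg]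
  | monomial n c =>
    have : δ.mapCoeffsSelf (monomial n c) = monomial n (δ c) := by
      ext k; simp [coeff_monomial, apply_ite δ]
    rw [this, RatFunc.algebraMap_monomial, RatFunc.algebraMap_monomial, Derivation.leibniz,
      Derivation.leibniz_pow, hX, hD]
    simp [mul_comm]

lemma RatFunc.mapCoeffsSelf_num_denom_eq_zero (hD : ∀ a : K, D (RatFunc.C a) = RatFunc.C (δ a))
    (hX : D RatFunc.X = 0) {b : RatFunc K} (hb : D b = 0) :
    δ.mapCoeffsSelf b.num = 0 ∧ δ.mapCoeffsSelf b.denom = 0 := by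
  set φ := algebraMap K[X] (RatFunc K)
  have hφ : Function.Injective φ := IsFractionRing.injective K[X] (RatFunc K)
  have hb' : b * φ b.denom = φ b.num :=
    (eq_div_iff (RatFunc.algebraMap_ne_zero b.denom_ne_zero)).mp (RatFunc.num_div_denom b).symm
  have hcross : b.num * δ.mapCoeffsSelf b.denom = δ.mapCoeffsSelf b.num * b.denom := by
    have h := congrArg D hb'
    rw [Derivation.leibniz, hb, smul_zero, add_zero, smul_eq_mul,
      RatFunc.derivation_algebraMap hD hX, RatFunc.derivation_algebraMap hD hX] at h
    apply hφ
    rw [map_mul, map_mul, ← hb', ← h]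
    ring
  have hdvd : b.denom ∣ δ.mapCoeffsSelf b.denom :=
    b.isCoprime_num_denom.symm.dvd_of_dvd_mul_left ⟨_, hcross.trans (mul_comm _ _)⟩
  have hdenom : δ.mapCoeffsSelf b.denom = 0 :=
    eq_zero_of_dvd_of_degree_lt hdvd (δ.degree_mapCoeffsSelf_lt b.monic_denom)
  refine ⟨?_, hdenom⟩
  rw [hdenom, mul_zero, eq_comm, mul_eq_zero] at hcross
  exact hcross.resolve_right b.denom_ne_zero

lemma C_mul_X_pow_mem_pMonomialSpan [CharP K p] {c : K} (hc : c ∈ pMonomialSpan p A) (n : ℕ) :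
    RatFunc.C c * RatFunc.X ^ n ∈ pMonomialSpan p (RatFunc.C '' A ∪ {RatFunc.X}) := by
  have hp := (Fact.out : p.Prime).pos
  suffices h : RatFunc.C c * RatFunc.X ^ (n % p) ∈
      pMonomialSpan p (RatFunc.C '' A ∪ {RatFunc.X}) by
    have hn : RatFunc.C c * RatFunc.X ^ n =
        (RatFunc.X ^ (n / p)) ^ p * (RatFunc.C c * RatFunc.X ^ (n % p)) := by
      rw [← pow_mul, mul_left_comm, ← pow_add, Nat.div_add_mod']
    rw [hn]
    exact Submodule.smul_mem _
      (⟨_, ⟨RatFunc.X ^ (n / p), rfl⟩⟩ : (frobenius (RatFunc K) p).fieldRange) h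
  induction hc using Submodule.span_induction with
  | mem m hm =>
    obtain ⟨k, a, ha, hA, e, rfl⟩ := hm
    refine Submodule.subset_span ⟨k + 1, Fin.cons RatFunc.X (RatFunc.C ∘ a), ?_, ?_,
      Fin.cons ⟨n % p, Nat.mod_lt n hp⟩ e, ?_⟩
    · rw [Fin.cons_injective_iff]
      exact ⟨fun ⟨j, hj⟩ => RatFunc.C_ne_X (a j) hj, RatFunc.C.injective.comp ha⟩
    · exact Fin.cases (Or.inr rfl) fun j => Or.inl ⟨a j, hA j, rfl⟩
    · simp [Fin.prod_univ_succ, map_prod, mul_comm]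
  | zero => simp
  | add x y _ _ hx hy => simpa [add_mul] using add_mem hx hy
  | smul t x _ hx =>
    have := Submodule.smul_mem _ (⟨_, map_mem_frobenius_fieldRange p RatFunc.C t.2⟩ :
      (frobenius (RatFunc K) p).fieldRange) hx
    simpa [Subfield.smul_def, mul_assoc] using this

lemma algebraMap_mem_pMonomialSpan [CharP K p] (hA : pSpan p δ A) {P : K[X]}
    (hP : δ.mapCoeffsSelf P = 0) :
    algebraMap K[X] (RatFunc K) P ∈ pMonomialSpan p (RatFunc.C '' A ∪ {RatFunc.X}) := by
  rw [P.as_sum_support, map_sum]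
  refine Submodule.sum_mem _ fun n _ => ?_
  rw [RatFunc.algebraMap_monomial]
  exact C_mul_X_pow_mem_pMonomialSpan p (hA _ (δ.mapCoeffsSelf_eq_zero_iff.mp hP n)) n

lemma pSpan_ratFunc [CharP K p] (hA : pSpan p δ A)
    (hD : ∀ a : K, D (RatFunc.C a) = RatFunc.C (δ a)) (hX : D RatFunc.X = 0) :
    pSpan p D (RatFunc.C '' A ∪ {RatFunc.X}) := by
  intro b hb
  obtain ⟨hnum, hdenom⟩ := RatFunc.mapCoeffsSelf_num_denom_eq_zero hD hX hb
  set φ := algebraMap K[X] (RatFunc K)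
  have hQ : φ b.denom ≠ 0 := RatFunc.algebraMap_ne_zero b.denom_ne_zero
  have hb' : b = (φ b.denom)⁻¹ ^ p * φ (b.num * b.denom ^ (p - 1)) :=
    calc b = φ b.num / φ b.denom := (RatFunc.num_div_denom b).symm
      _ = _ := by
        rw [map_mul, map_pow, inv_pow, ← pow_sub_one_mul (Fact.out : p.Prime).ne_zero]
        field_simp
  have hconst : δ.mapCoeffsSelf (b.num * b.denom ^ (p - 1)) = 0 := by
    simp only [Derivation.leibniz, Derivation.leibniz_pow, hnum, hdenom, smul_zero, add_zero]
  rw [hb']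
  exact Submodule.smul_mem _
    (⟨_, ⟨(φ b.denom)⁻¹, rfl⟩⟩ : (frobenius (RatFunc K) p).fieldRange)
    (algebraMap_mem_pMonomialSpan p hA hconst)

lemma eq_zero_of_sum_pow_mul_C_mul_X_pow_eq_zero [CharP K p] {ι : Type*} [Fintype ι]
    {M : ι → K} (hM : LinearIndependent (frobenius K p).fieldRange M) {G : Fin p × ι → K[X]}
    (hG : ∑ q, G q ^ p * C (M q.2) * X ^ (q.1 : ℕ) = 0) (q : Fin p × ι) : G q = 0 := by
  obtain ⟨s, i⟩ := q
  ext m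
  have hcoeff := congrArg (coeff · (p * m + s)) hG
  simp only [finsetSum_coeff, coeff_zero, coeff_pow_mul_C_mul_X_pow p _ _ (Fin.is_lt _) s.is_lt,
    Fintype.sum_prod_type, Fin.val_inj, ← Finset.ite_sum_zero, Finset.sum_ite_eq',
    Finset.mem_univ, if_true] at hcoeff
  have h := Fintype.linearIndependent_iff.mp hM (fun j => ⟨_, (G (s, j)).coeff m, rfl⟩)
    (by simpa [Subfield.smul_def, frobenius_def, mul_comm] using hcoeff) i
  simpa [Subtype.ext_iff, (Fact.out : p.Prime).ne_zero] using h

lemma linearIndependent_C_mul_X_pow [CharP K p] {ι : Type*} [Finite ι] {M : ι → K}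
    (hM : LinearIndependent (frobenius K p).fieldRange M) :
    LinearIndependent (frobenius (RatFunc K) p).fieldRange
      (fun q : Fin p × ι => RatFunc.C (M q.2) * RatFunc.X ^ (q.1 : ℕ)) := by
  have := Fintype.ofFinite ι
  rw [Fintype.linearIndependent_iff]
  intro g hg q
  choose h hh using fun q => (g q).2
  obtain ⟨d, hd⟩ := IsLocalization.exist_integer_multiples_of_finite (nonZeroDivisors K[X]) h
  choose G hG using hd
  set φ := algebraMap K[X] (RatFunc K)
  have hd0 : φ d ≠ 0 := RatFunc.algebraMap_ne_zero (nonZeroDivisors.coe_ne_zero d)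
  have hsum : ∑ q, G q ^ p * C (M q.2) * X ^ (q.1 : ℕ) = 0 := by
    apply IsFractionRing.injective K[X] (RatFunc K)
    rw [map_zero, map_sum, ← mul_zero (φ d ^ p), ← hg, Finset.mul_sum]
    refine Finset.sum_congr rfl fun q _ => ?_
    rw [map_mul, map_mul, map_pow, hG q, Subfield.smul_def, ← hh q, Algebra.smul_def,
      RatFunc.algebraMap_C, map_pow, RatFunc.algebraMap_X, frobenius_def, mul_pow]
    ring
  have hq := hG q
  rw [eq_zero_of_sum_pow_mul_C_mul_X_pow_eq_zero p hM hsum q, map_zero, Algebra.smul_def,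
    eq_comm, mul_eq_zero] at hq
  ext
  rw [← hh q, hq.resolve_left hd0, map_zero, ZeroMemClass.coe_zero]

lemma linearIndependent_C_prod_mul_X_pow [CharP K p] (hA : pIndep p A) {ι : Type*} [Fintype ι]
    {b : ι → K} (hb : Function.Injective b) (hbA : ∀ i, b i ∈ A) :
    LinearIndependent (frobenius (RatFunc K) p).fieldRange
      (fun q : Fin p × (ι → Fin p) =>
        RatFunc.C (∏ i, b i ^ (q.2 i : ℕ)) * RatFunc.X ^ (q.1 : ℕ)) :=
  -- `M` is given explicitly: unifying `?M q.2` with the product is not a pattern problem.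
  linearIndependent_C_mul_X_pow p (M := fun e : ι → Fin p => ∏ i, b i ^ (e i : ℕ))
    (hA.linearIndependent_prod p hb hbA)

lemma pIndep_ratFunc [CharP K p] (hA : pIndep p A) :
    pIndep p (RatFunc.C '' A ∪ {RatFunc.X}) := by
  intro n a ha haA
  by_cases hX : ∃ i₀, a i₀ = RatFunc.X
  · obtain ⟨i₀, hi₀⟩ := hX
    have hC (j : {j // j ≠ i₀}) : a j ∈ RatFunc.C '' A :=
      (haA j).resolve_right fun h => j.2 (ha (h.trans hi₀.symm))
    choose b hbA hb using hC
    have hbinj : Function.Injective b := fun i j hij =>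
      Subtype.ext (ha (by rw [← hb i, ← hb j, hij]))
    have hsplit : Function.Injective
        fun e : Fin n → Fin p => (e i₀, fun j : {j // j ≠ i₀} => e j) := by
      intro e f hef
      funext i
      by_cases hi : i = i₀
      · exact hi ▸ congrArg Prod.fst hef
      · exact congrFun (congrArg Prod.snd hef) ⟨i, hi⟩
    convert (linearIndependent_C_prod_mul_X_pow p hA hbinj hbA).comp _ hsplit using 1
    funext e
    simp [Fintype.prod_eq_mul_prod_subtype_ne _ i₀, hi₀, hb, mul_comm]
  · push Not at hX
    have hC (j : Fin n) : a j ∈ RatFunc.C '' A := (haA j).resolve_right (hX j)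
    choose b hbA hb using hC
    have hbinj : Function.Injective b := fun i j hij => ha (by rw [← hb i, ← hb j, hij])
    convert (linearIndependent_C_prod_mul_X_pow p hA hbinj hbA).comp _
      (Prod.mk_right_injective (0 : Fin p)) using 1
    funext e
    simp [hb]

end RatFunc

/-- If `A` is a differential `p`-basis of `(K, δ)` and `δ` is extended to `K(t)` with
`δ(t) = 0` (`t` transcendental), then `A ∪ {t}` is a differential `p`-basis of
`(K(t), δ)`. -/
theorem stmt16 {K : Type*} [Field K] [CharP K p]
    (δ : Derivation ℤ K K) (A : Set K) (hA : DiffPBasis p δ A)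
    (D : Derivation ℤ (RatFunc K) (RatFunc K))
    (hD : ∀ a : K, D (RatFunc.C a) = RatFunc.C (δ a))
    (hX : D RatFunc.X = 0) :
    DiffPBasis p D ((RatFunc.C (K := K)) '' A ∪ {RatFunc.X}) := by
  obtain ⟨hAconst, hAindep, hAspan⟩ := hA
  refine ⟨?_, pIndep_ratFunc p hAindep, pSpan_ratFunc p hAspan hD hX⟩
  rintro x (⟨a, ha, rfl⟩ | rfl)
  · rw [hD, hAconst a ha, map_zero]
  · exact hX
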